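/- Let f: ℝ^d → ℝ be differentiable with L-Lipschitz gradient, and consider an update θ' = θ - μ·g for a vector g satisfying ∇f(θ')ᵀg ≥ C‖g‖² with C ≥ 0. If 0 < μ ≤ 2C/L, then f(θ') ≤ f(θ). -/

import Mathlib

open RealInnerProductSpace

theorem stmt_2 {d : ℕ} (f : EuclideanSpace ℝ (Fin d) → ℝ) (L : ℝ) (hL : 0 < L)
    (hdiff : Differentiable ℝ f)
    (hlip : ∀ x y, ‖gradient f x - gradient f y‖ ≤ L * ‖x - y‖)
    (g θ : EuclideanSpace ℝ (Fin d)) (C μ : ℝ) (hC : 0 ≤ C)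
    (hμ : 0 < μ) (hμL : μ ≤ 2 * C / L)
    (θ' : EuclideanSpace ℝ (Fin d)) (hθ' : θ' = θ - μ • g)
    (halign : ⟪gradient f θ', g⟫ ≥ C * ‖g‖ ^ 2) :
    f θ' ≤ f θ := by
  subst hθ'
  set v : EuclideanSpace ℝ (Fin d) := μ • g with hv
  set p : EuclideanSpace ℝ (Fin d) := θ - μ • g with hp
  -- gradient is Lipschitz, hence continuous
  have hlipW : LipschitzWith L.toNNReal (gradient f) := by
    apply LipschitzWith.of_dist_le_mul
    intro x y
    simpa [dist_eq_norm, Real.coe_toNNReal _ hL.le] using hlip x y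
  have hgradcont : Continuous (gradient f) := hlipW.continuous
  -- fderiv applied to v equals inner product with gradient
  have hgrad : ∀ x, (fderiv ℝ f x) v = ⟪gradient f x, v⟫ := by
    intro x
    conv_lhs => rw [← (InnerProductSpace.toDual ℝ
      (EuclideanSpace ℝ (Fin d))).apply_symm_apply (fderiv ℝ f x)]
    rfl
  set φ : ℝ → ℝ := fun t => ⟪gradient f (p + t • v), v⟫ with hφ
  have hγ : ∀ t : ℝ, HasDerivAt (fun t : ℝ => p + t • v) v t := by
    intro t
    simpa using ((hasDerivAt_id t).smul_const v).const_add p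
  have hh : ∀ t : ℝ, HasDerivAt (fun t => f (p + t • v)) (φ t) t := by
    intro t
    have := ((hdiff (p + t • v)).hasFDerivAt).comp_hasDerivAt t (hγ t)
    rw [hgrad] at this
    exact this
  have hcont : Continuous φ := by
    apply Continuous.inner
    · exact hgradcont.comp (continuous_const.add (continuous_id.smul continuous_const))
    · exact continuous_const
  have hint : f (p + (1:ℝ) • v) - f (p + (0:ℝ) • v) = ∫ t in (0:ℝ)..1, φ t := by
    rw [intervalIntegral.integral_eq_sub_of_hasDerivAt (fun t _ => hh t)
      (hcont.intervalIntegrable 0 1)]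
  have hub : ∀ t ∈ Set.Icc (0:ℝ) 1, ⟪gradient f p, v⟫ - L * t * ‖v‖ ^ 2 ≤ φ t := by
    intro t ht
    have h1 : φ t - ⟪gradient f p, v⟫ = ⟪gradient f (p + t • v) - gradient f p, v⟫ := by
      rw [inner_sub_left]
    have h2 : |⟪gradient f (p + t • v) - gradient f p, v⟫| ≤
        ‖gradient f (p + t • v) - gradient f p‖ * ‖v‖ := abs_real_inner_le_norm _ _
    have h3 : ‖gradient f (p + t • v) - gradient f p‖ ≤ L * (t * ‖v‖) := by
      have := hlip (p + t • v) p
      simpa [norm_smul, abs_of_nonneg ht.1] using this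
    have h4 : ‖gradient f (p + t • v) - gradient f p‖ * ‖v‖ ≤ L * (t * ‖v‖) * ‖v‖ :=
      mul_le_mul_of_nonneg_right h3 (norm_nonneg v)
    have h5 : -(L * t * ‖v‖ ^ 2) ≤ φ t - ⟪gradient f p, v⟫ := by
      rw [h1]
      have h4' : L * (t * ‖v‖) * ‖v‖ = L * t * ‖v‖ ^ 2 := by ring
      have := neg_abs_le (⟪gradient f (p + t • v) - gradient f p, v⟫ : ℝ)
      linarith
    linarith
  have hintlb : (⟪gradient f p, v⟫ - L * ‖v‖ ^ 2 / 2 : ℝ) ≤ ∫ t in (0:ℝ)..1, φ t := by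
    have hmono : (∫ t in (0:ℝ)..1, (⟪gradient f p, v⟫ - L * t * ‖v‖ ^ 2)) ≤
        ∫ t in (0:ℝ)..1, φ t := by
      apply intervalIntegral.integral_mono_on (by norm_num)
      · exact ((continuous_const.sub ((continuous_const.mul continuous_id).mul
          continuous_const)).intervalIntegrable 0 1)
      · exact hcont.intervalIntegrable 0 1
      · exact hub
    have hcalc : (∫ t in (0:ℝ)..1, (⟪gradient f p, v⟫ - L * t * ‖v‖ ^ 2)) =
        ⟪gradient f p, v⟫ - L * ‖v‖ ^ 2 / 2 := by
      have : (∫ t in (0:ℝ)..1, (⟪gradient f p, v⟫ - L * t * ‖v‖ ^ 2)) =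
          (∫ t in (0:ℝ)..1, (⟪gradient f p, v⟫ : ℝ)) -
            ∫ t in (0:ℝ)..1, L * t * ‖v‖ ^ 2 := by
        rw [← intervalIntegral.integral_sub]
        · exact (continuous_const.intervalIntegrable 0 1)
        · exact ((continuous_const.mul continuous_id).mul
            continuous_const).intervalIntegrable 0 1
      rw [this]
      have h6 : (∫ t in (0:ℝ)..1, L * t * ‖v‖ ^ 2) = L * ‖v‖ ^ 2 / 2 := by
        have : (∫ t in (0:ℝ)..1, L * t * ‖v‖ ^ 2) =
            (L * ‖v‖ ^ 2) * ∫ t in (0:ℝ)..1, t := by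
          rw [← intervalIntegral.integral_const_mul]
          congr 1; ext t; ring
        rw [this, integral_id]
        ring
      rw [h6]
      simp
    linarith [hcalc ▸ hmono]
  -- translate back
  have hp1 : p + (1:ℝ) • v = θ := by
    rw [hp, hv]; simp
  have hp0 : p + (0:ℝ) • v = p := by simp
  have hkey : ⟪gradient f p, v⟫ - L * ‖v‖ ^ 2 / 2 ≤ f θ - f p := by
    rw [← hp1]
    calc ⟪gradient f p, v⟫ - L * ‖v‖ ^ 2 / 2 ≤ ∫ t in (0:ℝ)..1, φ t := hintlb
      _ = f (p + (1:ℝ) • v) - f (p + (0:ℝ) • v) := hint.symm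
      _ = f (p + (1:ℝ) • v) - f p := by rw [hp0]
  have hv1 : ⟪gradient f p, v⟫ = μ * ⟪gradient f p, g⟫ := real_inner_smul_right _ _ _
  have hv2 : ‖v‖ ^ 2 = μ ^ 2 * ‖g‖ ^ 2 := by
    rw [hv, norm_smul, mul_pow]
    simp [abs_of_pos hμ]
  rw [hv1, hv2] at hkey
  have hμL' : μ * L ≤ 2 * C := (le_div_iff₀ hL).mp hμL
  have h7 : μ * (C * ‖g‖ ^ 2) ≤ μ * ⟪gradient f p, g⟫ :=
    mul_le_mul_of_nonneg_left halign hμ.le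
  have h8 : 0 ≤ μ * ‖g‖ ^ 2 * (2 * C - μ * L) :=
    mul_nonneg (mul_nonneg hμ.le (sq_nonneg _)) (by linarith)
  have hring : μ * (C * ‖g‖ ^ 2) - L * (μ ^ 2 * ‖g‖ ^ 2) / 2 =
      μ * ‖g‖ ^ 2 * (2 * C - μ * L) / 2 := by ring
  linarith
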